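/- arXiv:1612.08430 — 5 statements merged into one kernel-verified Lean document; each statement's English description precedes it below -/
import Mathlib

section
/- Suppose the structure function has the form φ(x) = ψ(x_1,...,x_{i-1}, x_i·χ(x_{i+1},...,x_n)) where ψ and χ are coherent structure functions (component i in series with a coherent module). If component j > i belongs to the module and p_i ≤ p_j, then Cov(X_i, φ(X)) ≥ Cov(X_j, φ(X)). -/
open MeasureTheory ProbabilityTheory

noncomputable def cov {Ω : Type*} [MeasurableSpace Ω] (μ : Measure Ω) (U V : Ω → ℝ) : ℝ :=
  (∫ ω, U ω * V ω ∂μ) - (∫ ω, U ω ∂μ) * (∫ ω, V ω ∂μ)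

def b2r (x : Bool) : ℝ := if x then 1 else 0

noncomputable def rel {n : ℕ} (φ : (Fin n → Bool) → Bool) (p : Fin n → ℝ) : ℝ :=
  ∑ x : Fin n → Bool, (if φ x then (1:ℝ) else 0) * ∏ i, (if x i then p i else 1 - p i)

-- auxiliary lemmas
section helpers
set_option linter.unusedSectionVars false
variable {Ω : Type*} [MeasurableSpace Ω] {μ : Measure Ω} [IsProbabilityMeasure μ]
  {n : ℕ} {X : Fin n → Ω → Bool}

lemma meas_comp (hmeas : ∀ k, Measurable (X k)) (h : (Fin n → Bool) → ℝ) :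
    Measurable (fun ω => h (fun k => X k ω)) := by
  have : Measurable (fun ω => (fun k => X k ω)) := measurable_pi_lambda _ hmeas
  exact (Measurable.of_discrete (f := h)).comp this

lemma int_comp (hmeas : ∀ k, Measurable (X k)) (h : (Fin n → Bool) → ℝ) :
    Integrable (fun ω => h (fun k => X k ω)) μ := by
  refine ⟨(meas_comp hmeas h).aestronglyMeasurable, ?_⟩
  apply HasFiniteIntegral.of_bounded (C := ∑ x : Fin n → Bool, ‖h x‖)
  filter_upwards with ω
  exact Finset.single_le_sum (f := fun x => ‖h x‖) (fun x _ => norm_nonneg _)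
    (Finset.mem_univ _)

lemma mul_int (hmeas : ∀ k, Measurable (X k))
    (hindep : iIndepFun X μ)
    (S T : Finset (Fin n)) (hST : Disjoint S T) (f g : (Fin n → Bool) → ℝ)
    (hf : ∀ x y, (∀ k ∈ S, x k = y k) → f x = f y)
    (hg : ∀ x y, (∀ k ∈ T, x k = y k) → g x = g y) :
    ∫ ω, f (fun k => X k ω) * g (fun k => X k ω) ∂μ
      = (∫ ω, f (fun k => X k ω) ∂μ) * ∫ ω, g (fun k => X k ω) ∂μ := by
  set F : (S → Bool) → ℝ := fun y => f (fun l => if h : l ∈ S then y ⟨l, h⟩ else false)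
  set G : (T → Bool) → ℝ := fun y => g (fun l => if h : l ∈ T then y ⟨l, h⟩ else false)
  have hFf : ∀ x : Fin n → Bool, f x = F (fun s : S => x s) := by
    intro x; apply hf; intro k hk; simp [F, hk]
  have hGg : ∀ x : Fin n → Bool, g x = G (fun s : T => x s) := by
    intro x; apply hg; intro k hk; simp [G, hk]
  have hI := (hindep.indepFun_finset S T hST hmeas).comp
    (Measurable.of_discrete (f := F)) (Measurable.of_discrete (f := G))
  have h1 : (fun ω => f (fun k => X k ω)) = fun ω => F (fun s : S => X s ω) := by
    funext ω; exact hFf _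
  have h2 : (fun ω => g (fun k => X k ω)) = fun ω => G (fun s : T => X s ω) := by
    funext ω; exact hGg _
  have key := hI.integral_mul_eq_mul_integral
    ((meas_comp hmeas f).aestronglyMeasurable.congr (by rw [h1]; rfl))
    ((meas_comp hmeas g).aestronglyMeasurable.congr (by rw [h2]; rfl))
  simp only [Function.comp_def] at key
  have h3 : (fun ω => (f fun k => X k ω) * g fun k => X k ω)
      = ((fun x => F fun i : S => X i x) * fun x => G fun i : T => X i x) :=
    funext fun ω => by rw [hFf, hGg]; rfl
  rw [h1, h2]
  show integral μ _ = _
  rw [h3]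
  exact key

lemma cov_decomp (hmeas : ∀ k, Measurable (X k))
    (hindep : iIndepFun X μ)
    (T : Finset (Fin n)) (k : Fin n) (hk : k ∈ T)
    (cf df g1 : (Fin n → Bool) → ℝ)
    (hcf : ∀ x y, (∀ l ∈ Tᶜ, x l = y l) → cf x = cf y)
    (hdf : ∀ x y, (∀ l ∈ Tᶜ, x l = y l) → df x = df y)
    (hg1 : ∀ x y, (∀ l ∈ T, x l = y l) → g1 x = g1 y) :
    cov μ (fun ω => b2r (X k ω))
        (fun ω => cf (fun l => X l ω) + df (fun l => X l ω) * g1 (fun l => X l ω))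
      = (∫ ω, df (fun l => X l ω) ∂μ) *
        ((∫ ω, b2r (X k ω) * g1 (fun l => X l ω) ∂μ)
          - (∫ ω, b2r (X k ω) ∂μ) * ∫ ω, g1 (fun l => X l ω) ∂μ) := by
  have hek : ∀ x y : Fin n → Bool, (∀ l ∈ T, x l = y l) → b2r (x k) = b2r (y k) :=
    fun x y h => by rw [h k hk]
  have I3 := mul_int hmeas hindep T Tᶜ disjoint_compl_right (fun x => b2r (x k)) cf hek hcf
  have I4 := mul_int hmeas hindep Tᶜ T disjoint_compl_left df
    (fun x => b2r (x k) * g1 x) hdf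
    (fun x y h => by beta_reduce; rw [hek x y h, hg1 x y h])
  have I5 := mul_int hmeas hindep Tᶜ T disjoint_compl_left df g1 hdf hg1
  beta_reduce at I3 I4 I5
  have e1 : (fun ω => b2r (X k ω) *
      (cf (fun l => X l ω) + df (fun l => X l ω) * g1 (fun l => X l ω)))
      = fun ω => b2r (X k ω) * cf (fun l => X l ω)
        + df (fun l => X l ω) * (b2r (X k ω) * g1 (fun l => X l ω)) := by
    funext ω; ring
  have e2 : (fun ω => cf (fun l => X l ω) + df (fun l => X l ω) * g1 (fun l => X l ω))
      = fun ω => cf (fun l => X l ω) + df (fun l => X l ω) * g1 (fun l => X l ω) := rfl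
  have J1 : ∫ ω, b2r (X k ω) *
      (cf (fun l => X l ω) + df (fun l => X l ω) * g1 (fun l => X l ω)) ∂μ
      = (∫ ω, b2r (X k ω) * cf (fun l => X l ω) ∂μ)
        + ∫ ω, df (fun l => X l ω) * (b2r (X k ω) * g1 (fun l => X l ω)) ∂μ := by
    rw [e1]
    exact integral_add (int_comp hmeas (fun x => b2r (x k) * cf x))
      (int_comp hmeas (fun x => df x * (b2r (x k) * g1 x)))
  have J2 : ∫ ω, (cf (fun l => X l ω) + df (fun l => X l ω) * g1 (fun l => X l ω)) ∂μ
      = (∫ ω, cf (fun l => X l ω) ∂μ) + ∫ ω, df (fun l => X l ω) * g1 (fun l => X l ω) ∂μ :=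
    integral_add (int_comp hmeas cf) (int_comp hmeas (fun x => df x * g1 x))
  unfold cov
  rw [J1, J2, I3, I4, I5]
  ring
end helpers

lemma b2r_nonneg (b : Bool) : 0 ≤ b2r b := by cases b <;> simp [b2r]
lemma b2r_mono : ∀ {a b : Bool}, a ≤ b → b2r a ≤ b2r b := by
  intro a b h
  cases a
  · exact b2r_nonneg b
  · cases b
    · exact absurd h (by decide)
    · exact le_refl _
lemma b2r_le_one (b : Bool) : b2r b ≤ 1 := by cases b <;> simp [b2r]
lemma b2r_and (a b : Bool) : b2r (a && b) = b2r a * b2r b := by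
  cases a <;> cases b <;> simp [b2r]
lemma b2r_idem (a : Bool) : b2r a * b2r a = b2r a := by cases a <;> simp [b2r]

/-- A component in series with a coherent module is at least as important (w.r.t.
covariance importance) as any component of the module that is at least as reliable.
Here `A` is the set of components of the module, `χ` is the module structure
function (depending only on coordinates in `A`) and `ψ` is the organizing
structure function (depending only on coordinates outside `A`, coordinate `i`
carrying the series combination `x i && χ x`); both are coherent. -/
theorem stmt8 {Ω : Type*} [MeasurableSpace Ω] (μ : Measure Ω) [IsProbabilityMeasure μ]
    {n : ℕ} (X : Fin n → Ω → Bool) (hmeas : ∀ k, Measurable (X k))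
    (hindep : iIndepFun X μ)
    (A : Finset (Fin n)) (i j : Fin n) (hiA : i ∉ A) (hjA : j ∈ A)
    (ψ χ : (Fin n → Bool) → Bool)
    (hχdep : ∀ x y : Fin n → Bool, (∀ k ∈ A, x k = y k) → χ x = χ y)
    (hψdep : ∀ x y : Fin n → Bool, (∀ k, k ∉ A → x k = y k) → ψ x = ψ y)
    (hψmono : Monotone ψ) (hχmono : Monotone χ)
    (hψrel : ∀ k, k ∉ A →
      ∃ x, ψ (Function.update x k true) ≠ ψ (Function.update x k false))
    (hχrel : ∀ k ∈ A,
      ∃ x, χ (Function.update x k true) ≠ χ (Function.update x k false))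
    (φ : (Fin n → Bool) → Bool)
    (hφ : ∀ x, φ x = ψ (Function.update x i (x i && χ x)))
    (hij : μ {ω | X i ω = true} ≤ μ {ω | X j ω = true}) :
    cov μ (fun ω => b2r (X j ω)) (fun ω => b2r (φ (fun k => X k ω))) ≤
      cov μ (fun ω => b2r (X i ω)) (fun ω => b2r (φ (fun k => X k ω))) := by
  classical
  have hij' : i ≠ j := fun h => hiA (h ▸ hjA)
  set T : Finset (Fin n) := insert i A with hT
  -- the three pieces
  set cfn : (Fin n → Bool) → ℝ := fun x => b2r (ψ (Function.update x i false)) with hcfn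
  set dfn : (Fin n → Bool) → ℝ :=
    fun x => b2r (ψ (Function.update x i true)) - b2r (ψ (Function.update x i false)) with hdfn
  set g1n : (Fin n → Bool) → ℝ := fun x => b2r (x i) * b2r (χ x) with hg1n
  -- dependency facts
  have hmemTc : ∀ k : Fin n, k ∈ Tᶜ ↔ (k ≠ i ∧ k ∉ A) := by
    intro k; simp [hT, Finset.mem_compl, Finset.mem_insert, not_or]
  have hupd : ∀ (b : Bool) (x y : Fin n → Bool), (∀ l ∈ Tᶜ, x l = y l) →
      ψ (Function.update x i b) = ψ (Function.update y i b) := by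
    intro b x y h
    apply hψdep
    intro k hkA
    rcases eq_or_ne k i with rfl | hne
    · simp
    · rw [Function.update_of_ne hne, Function.update_of_ne hne]
      exact h k ((hmemTc k).2 ⟨hne, hkA⟩)
  have hcfdep : ∀ x y : Fin n → Bool, (∀ l ∈ Tᶜ, x l = y l) → cfn x = cfn y := by
    intro x y h; simp only [hcfn]; rw [hupd false x y h]
  have hdfdep : ∀ x y : Fin n → Bool, (∀ l ∈ Tᶜ, x l = y l) → dfn x = dfn y := by
    intro x y h; simp only [hdfn]; rw [hupd false x y h, hupd true x y h]
  have hg1dep : ∀ x y : Fin n → Bool, (∀ l ∈ T, x l = y l) → g1n x = g1n y := by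
    intro x y h; simp only [hg1n]
    rw [h i (Finset.mem_insert_self i A),
      hχdep x y (fun k hk => h k (Finset.mem_insert_of_mem hk))]
  -- pointwise decomposition of φ
  have hpt : ∀ x : Fin n → Bool, b2r (φ x) = cfn x + dfn x * g1n x := by
    intro x
    rw [hφ]
    simp only [hcfn, hdfn, hg1n, ← b2r_and]
    cases h : (x i && χ x) <;>
      simp only [show b2r false = 0 from rfl, show b2r true = 1 from rfl] <;> ring
  have hBIG : (fun ω => b2r (φ (fun k => X k ω)))
      = fun ω => cfn (fun k => X k ω) + dfn (fun k => X k ω) * g1n (fun k => X k ω) :=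
    funext fun ω => hpt _
  -- abbreviations for the integrals
  have hdisj : Disjoint ({i} : Finset (Fin n)) A := Finset.disjoint_singleton_left.2 hiA
  -- covariance decompositions
  have hcov : ∀ k, k ∈ T →
      cov μ (fun ω => b2r (X k ω)) (fun ω => b2r (φ (fun l => X l ω)))
        = (∫ ω, dfn (fun l => X l ω) ∂μ) *
          ((∫ ω, b2r (X k ω) * g1n (fun l => X l ω) ∂μ)
            - (∫ ω, b2r (X k ω) ∂μ) * ∫ ω, g1n (fun l => X l ω) ∂μ) := by
    intro k hk
    rw [hBIG]
    exact cov_decomp hmeas hindep T k hk cfn dfn g1n hcfdep hdfdep hg1dep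
  rw [hcov i (Finset.mem_insert_self i A), hcov j (Finset.mem_insert_of_mem hjA)]
  -- compute the remaining integrals
  have hEg1 : ∫ ω, g1n (fun l => X l ω) ∂μ
      = (∫ ω, b2r (X i ω) ∂μ) * ∫ ω, b2r (χ (fun l => X l ω)) ∂μ := by
    have := mul_int (μ := μ) hmeas hindep {i} A hdisj (fun x => b2r (x i)) (fun x => b2r (χ x))
      (fun x y h => by beta_reduce; rw [h i (Finset.mem_singleton_self i)])
      (fun x y h => by beta_reduce; rw [hχdep x y h])
    simpa only [hg1n] using this
  have hEi : ∫ ω, b2r (X i ω) * g1n (fun l => X l ω) ∂μ = ∫ ω, g1n (fun l => X l ω) ∂μ := by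
    apply integral_congr_ae
    filter_upwards with ω
    simp only [hg1n, ← mul_assoc, b2r_idem]
  have hEj : ∫ ω, b2r (X j ω) * g1n (fun l => X l ω) ∂μ
      = (∫ ω, b2r (X i ω) ∂μ) * ∫ ω, b2r (X j ω) * b2r (χ (fun l => X l ω)) ∂μ := by
    have e : (fun ω => b2r (X j ω) * g1n (fun l => X l ω))
        = fun ω => b2r (X i ω) * (b2r (X j ω) * b2r (χ (fun l => X l ω))) := by
      funext ω; simp only [hg1n]; ring
    show integral μ _ = _
    rw [e]
    exact mul_int hmeas hindep {i} A hdisj (fun x => b2r (x i))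
      (fun x => b2r (x j) * b2r (χ x))
      (fun x y h => by beta_reduce; rw [h i (Finset.mem_singleton_self i)])
      (fun x y h => by beta_reduce; rw [h j hjA, hχdep x y h])
  rw [hEi, hEj, hEg1]
  -- basic inequalities
  have hpint : ∀ k, ∫ ω, b2r (X k ω) ∂μ = (μ {ω | X k ω = true}).toReal := by
    intro k
    have e : (fun ω => b2r (X k ω))
        = Set.indicator {ω | X k ω = true} (fun _ => (1:ℝ)) := by
      funext ω
      by_cases h : X k ω = true
      · simp [b2r, h, Set.indicator_apply]
      · simp only [Bool.not_eq_true] at h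
        simp [b2r, h, Set.indicator_apply]
    show integral μ _ = _
    rw [e]
    have hs : MeasurableSet {ω | X k ω = true} := (hmeas k) (measurableSet_singleton true)
    exact (integral_indicator_const (1:ℝ) hs).trans (by rw [smul_eq_mul, mul_one]; rfl)
  have hpij : (∫ ω, b2r (X i ω) ∂μ) ≤ ∫ ω, b2r (X j ω) ∂μ := by
    rw [hpint i, hpint j]
    exact ENNReal.toReal_mono (measure_ne_top μ _) hij
  have hpi : 0 ≤ ∫ ω, b2r (X i ω) ∂μ := integral_nonneg fun ω => b2r_nonneg _
  have hEC : 0 ≤ ∫ ω, b2r (χ (fun l => X l ω)) ∂μ := integral_nonneg fun ω => b2r_nonneg _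
  have hEd : 0 ≤ ∫ ω, dfn (fun l => X l ω) ∂μ := by
    apply integral_nonneg
    intro ω
    simp only [hdfn, Pi.zero_apply, sub_nonneg]
    apply b2r_mono
    apply hψmono
    intro l
    rcases eq_or_ne l i with rfl | h
    · simp
    · simp [Function.update_of_ne h]
  have hVC : (∫ ω, b2r (X j ω) * b2r (χ (fun l => X l ω)) ∂μ)
      ≤ ∫ ω, b2r (χ (fun l => X l ω)) ∂μ := by
    apply integral_mono (int_comp hmeas (fun x => b2r (x j) * b2r (χ x)))
      (int_comp hmeas (fun x => b2r (χ x)))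
    intro ω
    calc b2r (X j ω) * b2r (χ fun l => X l ω) ≤ 1 * b2r (χ fun l => X l ω) :=
          mul_le_mul_of_nonneg_right (b2r_le_one _) (b2r_nonneg _)
      _ = _ := one_mul _
  set pi := ∫ ω, b2r (X i ω) ∂μ
  set pj := ∫ ω, b2r (X j ω) ∂μ
  set EC := ∫ ω, b2r (χ (fun l => X l ω)) ∂μ
  set Ed := ∫ ω, dfn (fun l => X l ω) ∂μ
  set EjC := ∫ ω, b2r (X j ω) * b2r (χ (fun l => X l ω)) ∂μ
  nlinarith [mul_nonneg (mul_nonneg hEd hpi) (sub_nonneg.2 hVC),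
    mul_nonneg (mul_nonneg hEd hpi) (mul_nonneg (sub_nonneg.2 hpij) hEC)]
end

section
/- Suppose the structure function has the form φ(x) = ψ(x_1,...,x_{i-1}, 1-(1-x_i)(1-χ(x_{i+1},...,x_n))) where ψ and χ are coherent structure functions (component i parallel to a coherent module). If component j > i belongs to the module and p_i ≥ p_j, then Cov(X_i, φ(X)) ≥ Cov(X_j, φ(X)). -/
open MeasureTheory ProbabilityTheory

/-!
Write `pivot f k x = f(1ₖ, x) - f(0ₖ, x)`. Splitting `f(X)` along `X k`, independence of `X k`
from the other coordinates gives `Cov(X k, f(X)) = pₖ (1 - pₖ) E[pivot f k X]`.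
With `δ = pivot ψ i` and `e = pivot χ j`, the parallel structure gives
`pivot φ i = δ (1 - χ)` and `pivot φ j = (1 - xᵢ) δ e`. Since `δ e` ignores both `i` and `j`,
`E[pivot φ j] = (1 - pᵢ) E[δ e]`, while the pointwise bound `(1 - xⱼ) e ≤ 1 - χ` gives
`E[pivot φ i] ≥ (1 - pⱼ) E[δ e]`. Hence
`Cov(Xᵢ, φ) ≥ pᵢ (1 - pᵢ)(1 - pⱼ) E[δ e] ≥ pⱼ (1 - pⱼ)(1 - pᵢ) E[δ e] = Cov(Xⱼ, φ)`.
-/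

namespace Reliability

open Function

@[simp]
lemma b2r_false : b2r false = 0 := rfl

@[simp]
lemma b2r_true : b2r true = 1 := rfl

lemma b2r_le_one (a : Bool) : b2r a ≤ 1 := by
  cases a <;> simp [b2r]

lemma b2r_or (a c : Bool) : b2r (a || c) = b2r a + (1 - b2r a) * b2r c := by
  cases a <;> cases c <;> simp [b2r]

section Coordinates

variable {ι α : Type*} [DecidableEq ι]

def IgnoresCoord (f : (ι → Bool) → α) (k : ι) : Prop :=
  ∀ x b, f (update x k b) = f x

noncomputable def pivot (f : (ι → Bool) → Bool) (k : ι) (x : ι → Bool) : ℝ :=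
  b2r (f (update x k true)) - b2r (f (update x k false))

lemma ignoresCoord_of_forall_eq {P : ι → Prop} {f : (ι → Bool) → α}
    (hf : ∀ x y : ι → Bool, (∀ l, P l → x l = y l) → f x = f y) {k : ι} (hk : ¬ P k) :
    IgnoresCoord f k := fun _ _ =>
  hf _ _ fun _ hl => update_of_ne (ne_of_apply_ne P fun h => hk (h ▸ hl)) _ _

lemma ignoresCoord_comp_update (f : (ι → Bool) → α) (k : ι) (b : Bool) :
    IgnoresCoord (fun x => f (update x k b)) k := by
  intro x c
  simp only [update_idem]

lemma pivot_ignoresCoord (f : (ι → Bool) → Bool) (k : ι) : IgnoresCoord (pivot f k) k := by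
  intro x b
  simp only [pivot, update_idem]

lemma IgnoresCoord.apply_update {f : (ι → Bool) → α} {l : ι} (hf : IgnoresCoord f l) {k : ι}
    (hkl : k ≠ l) (x : ι → Bool) (b c : Bool) :
    f (update (update x l c) k b) = f (update x k b) := by
  rw [update_comm hkl.symm, hf]

lemma IgnoresCoord.pivot {f : (ι → Bool) → Bool} {l : ι} (hf : IgnoresCoord f l) {k : ι}
    (hkl : k ≠ l) : IgnoresCoord (pivot f k) l := by
  intro x b
  simp only [Reliability.pivot, hf.apply_update hkl]

lemma IgnoresCoord.mul {f g : (ι → Bool) → ℝ} {k : ι} (hf : IgnoresCoord f k)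
    (hg : IgnoresCoord g k) : IgnoresCoord (f * g) k := by
  intro x b
  simp only [Pi.mul_apply, hf x b, hg x b]

lemma b2r_apply_update (f : (ι → Bool) → Bool) (x : ι → Bool) (k : ι) (c : Bool) :
    b2r (f (update x k c)) = b2r (f (update x k false)) + b2r c * pivot f k x := by
  cases c <;> simp [pivot, b2r]

lemma b2r_apply_eq (f : (ι → Bool) → Bool) (x : ι → Bool) (k : ι) :
    b2r (f x) = b2r (f (update x k false)) + b2r (x k) * pivot f k x := by
  simpa using b2r_apply_update f x k (x k)

lemma pivot_nonneg {f : (ι → Bool) → Bool} (hf : Monotone f) (k : ι) (x : ι → Bool) :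
    0 ≤ pivot f k x := by
  have hle := hf (update_mono (Bool.false_le true) : update x k false ≤ update x k true)
  revert hle
  unfold pivot b2r
  split_ifs <;> simp_all

lemma one_sub_mul_pivot_le (f : (ι → Bool) → Bool) (k : ι) (x : ι → Bool) :
    (1 - b2r (x k)) * pivot f k x ≤ 1 - b2r (f x) := by
  cases hx : x k
  · have hupd : update x k false = x := by rw [← hx, update_eq_self]
    simp only [pivot, hupd, b2r_false]
    linarith [b2r_le_one (f (update x k true))]
  · simp only [b2r_true]
    linarith [b2r_le_one (f x)]

end Coordinates

section Parallel

variable {ι : Type*} [DecidableEq ι] {φ ψ χ : (ι → Bool) → Bool} {i j : ι}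

lemma pivot_parallel_eq (hφ : ∀ x, φ x = ψ (update x i (x i || χ x)))
    (hχ : IgnoresCoord χ i) (x : ι → Bool) :
    pivot φ i x = pivot ψ i x * (1 - b2r (χ x)) := by
  have h := b2r_apply_update ψ x i (χ x)
  simp only [pivot, hφ, update_idem, update_self, Bool.true_or, Bool.false_or, hχ x false] at h ⊢
  rw [h]
  ring

lemma pivot_module_eq (hφ : ∀ x, φ x = ψ (update x i (x i || χ x)))
    (hψ : IgnoresCoord ψ j) (hij : i ≠ j) (x : ι → Bool) :
    pivot φ j x = (1 - b2r (x i)) * (pivot ψ i x * pivot χ j x) := by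
  have h (b : Bool) : b2r (φ (update x j b)) =
      b2r (ψ (update x i false)) + b2r (x i || χ (update x j b)) * pivot ψ i x := by
    rw [hφ, update_of_ne hij, hψ.apply_update hij, b2r_apply_update]
  simp only [pivot, h, b2r_or]
  ring

end Parallel

section Probability

variable {Ω ι : Type*} [MeasurableSpace Ω] {μ : Measure Ω} [Fintype ι] {X : ι → Ω → Bool}

lemma integral_b2r_eq_measureReal {Z : Ω → Bool} (hZ : Measurable Z) :
    ∫ ω, b2r (Z ω) ∂μ = μ.real {ω | Z ω = true} := by
  rw [show {ω | Z ω = true} = Z ⁻¹' {true} from rfl,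
    ← integral_indicator_one (hZ (measurableSet_singleton true))]
  congr 1
  ext ω
  cases h : Z ω <;> simp [h]

lemma integrable_comp_coords [IsFiniteMeasure μ] (hX : ∀ k, Measurable (X k))
    (f : (ι → Bool) → ℝ) : Integrable (fun ω => f (fun k => X k ω)) μ :=
  (integrable_map_measure (measurable_of_countable f).aestronglyMeasurable
    (measurable_pi_lambda _ hX).aemeasurable).mp Integrable.of_finite

variable [DecidableEq ι]

lemma integral_mul_of_ignoresCoord (hX : ∀ k, Measurable (X k)) (hindep : iIndepFun X μ)
    {f : (ι → Bool) → ℝ} {k : ι} (hf : IgnoresCoord f k) (g : Bool → ℝ) :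
    ∫ ω, g (X k ω) * f (fun l => X l ω) ∂μ =
      (∫ ω, g (X k ω) ∂μ) * ∫ ω, f (fun l => X l ω) ∂μ := by
  have hrestrict : ∀ ω, f (fun l => X l ω) =
      f (fun l => if h : l ∈ ({k}ᶜ : Finset ι) then X l ω else false) := by
    intro ω
    rw [← hf _ false]
    congr 1
    ext l
    by_cases hl : l = k <;> simp [hl]
  simp only [hrestrict]
  exact (hindep.indepFun_finset {k} {k}ᶜ disjoint_compl_right hX).integral_fun_comp_mul_comp
    (f := fun y => g (y ⟨k, Finset.mem_singleton_self k⟩))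
    (g := fun y => f (fun l => if h : l ∈ ({k}ᶜ : Finset ι) then y ⟨l, h⟩ else false))
    (measurable_pi_lambda _ fun _ => hX _).aemeasurable
    (measurable_pi_lambda _ fun _ => hX _).aemeasurable
    (measurable_of_countable _).aestronglyMeasurable
    (measurable_of_countable _).aestronglyMeasurable

lemma cov_eq_mul_integral_pivot [IsFiniteMeasure μ] (hX : ∀ k, Measurable (X k))
    (hindep : iIndepFun X μ) (f : (ι → Bool) → Bool) (k : ι) :
    cov μ (fun ω => b2r (X k ω)) (fun ω => b2r (f (fun l => X l ω))) =
      (∫ ω, b2r (X k ω) ∂μ) * (1 - ∫ ω, b2r (X k ω) ∂μ) *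
        ∫ ω, pivot f k (fun l => X l ω) ∂μ := by
  set f₀ : (ι → Bool) → ℝ := fun x => b2r (f (update x k false))
  have hf₀ : IgnoresCoord f₀ k := ignoresCoord_comp_update (fun x => b2r (f x)) k false
  have hD : IgnoresCoord (pivot f k) k := pivot_ignoresCoord f k
  have hint (g : (ι → Bool) → ℝ) := integrable_comp_coords (μ := μ) hX g
  have hmul (g : (ι → Bool) → ℝ) : Integrable (fun ω => b2r (X k ω) * g (fun l => X l ω)) μ := by
    simpa using hint (fun x => b2r (x k) * g x)
  have hsplit : ∀ ω, b2r (f (fun l => X l ω)) =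
      f₀ (fun l => X l ω) + b2r (X k ω) * pivot f k (fun l => X l ω) :=
    fun ω => b2r_apply_eq f _ k
  have hsplit_mul : ∀ ω, b2r (X k ω) * b2r (f (fun l => X l ω)) =
      b2r (X k ω) * f₀ (fun l => X l ω) + b2r (X k ω) * pivot f k (fun l => X l ω) := by
    intro ω
    rw [hsplit]
    cases X k ω <;> simp
  simp only [cov, hsplit_mul]
  simp only [hsplit]
  rw [integral_add (hmul _) (hmul _), integral_add (hint _) (hmul _),
    integral_mul_of_ignoresCoord hX hindep hf₀, integral_mul_of_ignoresCoord hX hindep hD]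
  ring

lemma integral_one_sub_mul_of_ignoresCoord [IsProbabilityMeasure μ] (hX : ∀ k, Measurable (X k))
    (hindep : iIndepFun X μ) {f : (ι → Bool) → ℝ} {k : ι} (hf : IgnoresCoord f k) :
    ∫ ω, (1 - b2r (X k ω)) * f (fun l => X l ω) ∂μ =
      (1 - ∫ ω, b2r (X k ω) ∂μ) * ∫ ω, f (fun l => X l ω) ∂μ := by
  rw [integral_mul_of_ignoresCoord hX hindep hf (fun b => 1 - b2r b),
    integral_sub (integrable_const 1) (integrable_comp_coords hX fun x => b2r (x k))]
  simp

end Probability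

section ParallelModule

variable {Ω ι : Type*} [MeasurableSpace Ω] {μ : Measure Ω} [IsProbabilityMeasure μ]
  [Fintype ι] [DecidableEq ι] {X : ι → Ω → Bool} {φ ψ χ : (ι → Bool) → Bool} {i j : ι}

lemma one_sub_mul_integral_le_integral_pivot_parallel (hX : ∀ k, Measurable (X k))
    (hindep : iIndepFun X μ)
    (hφ : ∀ x, φ x = ψ (update x i (x i || χ x))) (hψ : IgnoresCoord ψ j)
    (hχ : IgnoresCoord χ i) (hψmono : Monotone ψ) (hij : i ≠ j) :
    (1 - ∫ ω, b2r (X j ω) ∂μ) * ∫ ω, (pivot ψ i * pivot χ j) (fun k => X k ω) ∂μ ≤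
      ∫ ω, pivot φ i (fun k => X k ω) ∂μ := by
  rw [← integral_one_sub_mul_of_ignoresCoord hX hindep
    ((hψ.pivot hij).mul (pivot_ignoresCoord χ j))]
  refine integral_mono
    (integrable_comp_coords hX fun x => (1 - b2r (x j)) * (pivot ψ i * pivot χ j) x)
    (integrable_comp_coords hX _) fun ω => ?_
  simp only [Pi.mul_apply, pivot_parallel_eq hφ hχ]
  rw [mul_left_comm]
  exact mul_le_mul_of_nonneg_left (one_sub_mul_pivot_le χ j fun k => X k ω)
    (pivot_nonneg hψmono i _)

lemma integral_pivot_module_eq (hX : ∀ k, Measurable (X k)) (hindep : iIndepFun X μ)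
    (hφ : ∀ x, φ x = ψ (update x i (x i || χ x))) (hψ : IgnoresCoord ψ j)
    (hχ : IgnoresCoord χ i) (hij : i ≠ j) :
    ∫ ω, pivot φ j (fun k => X k ω) ∂μ =
      (1 - ∫ ω, b2r (X i ω) ∂μ) * ∫ ω, (pivot ψ i * pivot χ j) (fun k => X k ω) ∂μ := by
  simp only [pivot_module_eq hφ hψ hij]
  exact integral_one_sub_mul_of_ignoresCoord hX hindep
    ((pivot_ignoresCoord ψ i).mul (hχ.pivot hij.symm))

end ParallelModule

end Reliability

open Reliability

theorem stmt9_general {Ω : Type*} [MeasurableSpace Ω] (μ : Measure Ω) [IsProbabilityMeasure μ]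
    {n : ℕ} (X : Fin n → Ω → Bool) (hmeas : ∀ k, Measurable (X k))
    (hindep : iIndepFun X μ)
    (A : Finset (Fin n)) (i j : Fin n) (hiA : i ∉ A) (hjA : j ∈ A)
    (ψ χ : (Fin n → Bool) → Bool)
    (hχdep : ∀ x y : Fin n → Bool, (∀ k ∈ A, x k = y k) → χ x = χ y)
    (hψdep : ∀ x y : Fin n → Bool, (∀ k, k ∉ A → x k = y k) → ψ x = ψ y)
    (hψmono : Monotone ψ) (hχmono : Monotone χ)
    (φ : (Fin n → Bool) → Bool)
    (hφ : ∀ x, φ x = ψ (Function.update x i (x i || χ x)))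
    (hij : μ {ω | X j ω = true} ≤ μ {ω | X i ω = true}) :
    cov μ (fun ω => b2r (X j ω)) (fun ω => b2r (φ (fun k => X k ω))) ≤
      cov μ (fun ω => b2r (X i ω)) (fun ω => b2r (φ (fun k => X k ω))) := by
  have hne : i ≠ j := fun h => hiA (h ▸ hjA)
  have hψj : IgnoresCoord ψ j := ignoresCoord_of_forall_eq hψdep (not_not.mpr hjA)
  have hχi : IgnoresCoord χ i := ignoresCoord_of_forall_eq hχdep hiA
  set p : Fin n → ℝ := fun k => ∫ ω, b2r (X k ω) ∂μ
  have hp (k : Fin n) : p k = μ.real {ω | X k ω = true} := integral_b2r_eq_measureReal (hmeas k)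
  have hpji : p j ≤ p i := by
    rw [hp, hp]
    exact ENNReal.toReal_mono (measure_ne_top μ _) hij
  have hpi : 0 ≤ p i := by rw [hp]; exact measureReal_nonneg
  have hq (k : Fin n) : 0 ≤ 1 - p k := by rw [hp]; exact sub_nonneg.2 measureReal_le_one
  set m := ∫ ω, (pivot ψ i * pivot χ j) (fun k => X k ω) ∂μ
  have hm : 0 ≤ m :=
    integral_nonneg fun _ => mul_nonneg (pivot_nonneg hψmono i _) (pivot_nonneg hχmono j _)
  have hBi : (1 - p j) * m ≤ ∫ ω, pivot φ i (fun k => X k ω) ∂μ :=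
    one_sub_mul_integral_le_integral_pivot_parallel hmeas hindep hφ hψj hχi hψmono hne
  rw [cov_eq_mul_integral_pivot hmeas hindep φ j, cov_eq_mul_integral_pivot hmeas hindep φ i,
    integral_pivot_module_eq hmeas hindep hφ hψj hχi hne]
  calc p j * (1 - p j) * ((1 - p i) * m)
      = p j * ((1 - p i) * ((1 - p j) * m)) := by ring
    _ ≤ p i * ((1 - p i) * ((1 - p j) * m)) :=
      mul_le_mul_of_nonneg_right hpji (mul_nonneg (hq i) (mul_nonneg (hq j) hm))
    _ ≤ p i * ((1 - p i) * ∫ ω, pivot φ i (fun k => X k ω) ∂μ) :=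
      mul_le_mul_of_nonneg_left (mul_le_mul_of_nonneg_left hBi (hq i)) hpi
    _ = p i * (1 - p i) * ∫ ω, pivot φ i (fun k => X k ω) ∂μ := by ring

/-- A component parallel to a coherent module is at least as important (w.r.t.
covariance importance) as any component of the module that is at most as reliable. -/
theorem stmt9 {Ω : Type*} [MeasurableSpace Ω] (μ : Measure Ω) [IsProbabilityMeasure μ]
    {n : ℕ} (X : Fin n → Ω → Bool) (hmeas : ∀ k, Measurable (X k))
    (hindep : iIndepFun X μ)
    (A : Finset (Fin n)) (i j : Fin n) (hiA : i ∉ A) (hjA : j ∈ A)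
    (ψ χ : (Fin n → Bool) → Bool)
    (hχdep : ∀ x y : Fin n → Bool, (∀ k ∈ A, x k = y k) → χ x = χ y)
    (hψdep : ∀ x y : Fin n → Bool, (∀ k, k ∉ A → x k = y k) → ψ x = ψ y)
    (hψmono : Monotone ψ) (hχmono : Monotone χ)
    (hψrel : ∀ k, k ∉ A →
      ∃ x, ψ (Function.update x k true) ≠ ψ (Function.update x k false))
    (hχrel : ∀ k ∈ A,
      ∃ x, χ (Function.update x k true) ≠ χ (Function.update x k false))
    (φ : (Fin n → Bool) → Bool)
    (hφ : ∀ x, φ x = ψ (Function.update x i (x i || χ x)))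
    (hij : μ {ω | X j ω = true} ≤ μ {ω | X i ω = true}) :
    cov μ (fun ω => b2r (X j ω)) (fun ω => b2r (φ (fun k => X k ω))) ≤
      cov μ (fun ω => b2r (X i ω)) (fun ω => b2r (φ (fun k => X k ω))) :=
  stmt9_general μ X hmeas hindep A i j hiA hjA ψ χ hχdep hψdep hψmono hχmono φ hφ hij
end

section
/- If component 1 is in series with the rest of a coherent system, i.e., φ(x) = x_1·ψ(x_2,...,x_n) with ψ coherent, and p_1 ≤ p_j for some j ∈ {2,...,n}, then the Birnbaum importance satisfies I^B_φ(1) ≥ I^B_φ(j), where I^B_φ(k) = h_φ(p,1_k) - h_φ(p,0_k). -/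
open MeasureTheory ProbabilityTheory

/-!
Let `E b` be the reliability of `ψ` when component `i` works and component `j` is in state `b`.
Conditioning on component `i`, the Birnbaum importance of `j` in the series system is
`p i * (E 1 - E 0)`, while that of `i` is the reliability of `ψ` when `i` works, which by
conditioning on `j` equals `p j * E 1 + (1 - p j) * E 0`. As reliabilities are nonnegative,
`p i * (E 1 - E 0) ≤ p i * E 1 ≤ p j * E 1 ≤ p j * E 1 + (1 - p j) * E 0`.
-/

open Finset Function

namespace Reliability

variable {n : ℕ}

lemma update_mem_Icc {q : Fin n → ℝ} (hq : ∀ k, q k ∈ Set.Icc (0 : ℝ) 1) (k : Fin n) {b : ℝ}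
    (hb : b ∈ Set.Icc (0 : ℝ) 1) (l : Fin n) : update q k b l ∈ Set.Icc (0 : ℝ) 1 :=
  (forall_update_iff q fun _ t => t ∈ Set.Icc (0 : ℝ) 1).2 ⟨hb, fun l _ => hq l⟩ l

lemma prod_weight_pivot (q : Fin n → ℝ) (x : Fin n → Bool) (k : Fin n) :
    ∏ l, (if x l then q l else 1 - q l) =
      q k * ∏ l, (if x l then update q k 1 l else 1 - update q k 1 l) +
        (1 - q k) * ∏ l, (if x l then update q k 0 l else 1 - update q k 0 l) := by
  simp_rw [apply_update (fun l (t : ℝ) => if x l then t else 1 - t) q k]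
  rw [prod_update_of_mem (mem_univ k), prod_update_of_mem (mem_univ k),
    prod_eq_mul_prod_sdiff_singleton_of_mem (mem_univ k)]
  cases x k <;> simp only [Bool.false_eq_true, if_true, if_false] <;> ring

lemma rel_pivot (φ : (Fin n → Bool) → Bool) (q : Fin n → ℝ) (k : Fin n) :
    rel φ q = q k * rel φ (update q k 1) + (1 - q k) * rel φ (update q k 0) := by
  unfold rel
  rw [mul_sum, mul_sum, ← sum_add_distrib]
  refine sum_congr rfl fun x _ => ?_
  rw [prod_weight_pivot q x k]
  ring

lemma rel_nonneg (φ : (Fin n → Bool) → Bool) {q : Fin n → ℝ}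
    (hq : ∀ k, q k ∈ Set.Icc (0 : ℝ) 1) : 0 ≤ rel φ q := by
  refine sum_nonneg fun x _ => mul_nonneg (by positivity) (prod_nonneg fun l _ => ?_)
  obtain ⟨h0, h1⟩ := hq l
  split_ifs <;> linarith

lemma rel_series_of_eq_zero (i : Fin n) (ψ : (Fin n → Bool) → Bool) {q : Fin n → ℝ}
    (hq : q i = 0) : rel (fun x => x i && ψ x) q = 0 := by
  refine sum_eq_zero fun x _ => ?_
  by_cases hx : x i
  · exact mul_eq_zero_of_right _ (prod_eq_zero (mem_univ i) (by simp [hx, hq]))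
  · simp [hx]

lemma rel_series_of_eq_one (i : Fin n) (ψ : (Fin n → Bool) → Bool) {q : Fin n → ℝ}
    (hq : q i = 1) : rel (fun x => x i && ψ x) q = rel ψ q := by
  refine sum_congr rfl fun x _ => ?_
  by_cases hx : x i
  · simp [hx]
  · rw [if_neg (by simp [hx]), zero_mul]
    exact (mul_eq_zero_of_right _ (prod_eq_zero (mem_univ i) (by simp [hx, hq]))).symm

lemma rel_series (i : Fin n) (ψ : (Fin n → Bool) → Bool) (q : Fin n → ℝ) :
    rel (fun x => x i && ψ x) q = q i * rel ψ (update q i 1) := by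
  rw [rel_pivot _ q i, rel_series_of_eq_one i ψ (update_self i 1 q),
    rel_series_of_eq_zero i ψ (update_self i 0 q)]
  ring

noncomputable def birnbaum (φ : (Fin n → Bool) → Bool) (p : Fin n → ℝ) (k : Fin n) : ℝ :=
  rel φ (update p k 1) - rel φ (update p k 0)

lemma birnbaum_series_self (i : Fin n) (ψ : (Fin n → Bool) → Bool) (p : Fin n → ℝ) :
    birnbaum (fun x => x i && ψ x) p i = rel ψ (update p i 1) := by
  rw [birnbaum, rel_series, rel_series, update_self, update_self, update_idem, update_idem]
  ring

lemma birnbaum_series_of_ne {i j : Fin n} (hij : j ≠ i) (ψ : (Fin n → Bool) → Bool)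
    (p : Fin n → ℝ) :
    birnbaum (fun x => x i && ψ x) p j =
      p i * (rel ψ (update (update p i 1) j 1) - rel ψ (update (update p i 1) j 0)) := by
  rw [birnbaum, rel_series, rel_series, update_of_ne hij.symm, update_of_ne hij.symm,
    update_comm hij.symm, update_comm hij.symm]
  ring

end Reliability

open Reliability in
theorem stmt10_general {n : ℕ} (i j : Fin n) (hij : j ≠ i)
    (ψ : (Fin n → Bool) → Bool)
    (p : Fin n → ℝ) (h01 : ∀ k, p k ∈ Set.Icc (0:ℝ) 1) (hp : p i ≤ p j) :
    rel (fun x => x i && ψ x) (Function.update p j 1) -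
        rel (fun x => x i && ψ x) (Function.update p j 0) ≤
      rel (fun x => x i && ψ x) (Function.update p i 1) -
        rel (fun x => x i && ψ x) (Function.update p i 0) := by
  change birnbaum _ p j ≤ birnbaum _ p i
  rw [birnbaum_series_of_ne hij, birnbaum_series_self, rel_pivot ψ (update p i 1) j,
    update_of_ne hij]
  have hu : ∀ k, update p i 1 k ∈ Set.Icc (0 : ℝ) 1 := update_mem_Icc h01 i ⟨zero_le_one, le_rfl⟩
  set E₀ := rel ψ (update (update p i 1) j 0)
  set E₁ := rel ψ (update (update p i 1) j 1)
  have hE₀ : 0 ≤ E₀ := rel_nonneg ψ (update_mem_Icc hu j ⟨le_rfl, zero_le_one⟩)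
  have hE₁ : 0 ≤ E₁ := rel_nonneg ψ (update_mem_Icc hu j ⟨zero_le_one, le_rfl⟩)
  obtain ⟨hpi, -⟩ := h01 i
  obtain ⟨-, hpj⟩ := h01 j
  calc p i * (E₁ - E₀)
      ≤ p i * E₁ := mul_le_mul_of_nonneg_left (sub_le_self _ hE₀) hpi
    _ ≤ p j * E₁ := mul_le_mul_of_nonneg_right hp hE₁
    _ ≤ p j * E₁ + (1 - p j) * E₀ := le_add_of_nonneg_right (mul_nonneg (sub_nonneg.2 hpj) hE₀)

/-- For a component i in series with the rest of a coherent system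
(φ x = x i && ψ x, where ψ does not depend on coordinate i), if p i ≤ p j then the
Birnbaum importance of i dominates that of j. -/
theorem stmt10 {n : ℕ} (i j : Fin n) (hij : j ≠ i)
    (ψ : (Fin n → Bool) → Bool)
    (hψdep : ∀ (x : Fin n → Bool) (b : Bool), ψ (Function.update x i b) = ψ x)
    (hψmono : Monotone ψ)
    (hψrel : ∀ k, k ≠ i →
      ∃ x, ψ (Function.update x k true) ≠ ψ (Function.update x k false))
    (p : Fin n → ℝ) (h01 : ∀ k, p k ∈ Set.Icc (0:ℝ) 1) (hp : p i ≤ p j) :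
    rel (fun x => x i && ψ x) (Function.update p j 1) -
        rel (fun x => x i && ψ x) (Function.update p j 0) ≤
      rel (fun x => x i && ψ x) (Function.update p i 1) -
        rel (fun x => x i && ψ x) (Function.update p i 0) :=
  stmt10_general i j hij ψ p h01 hp
end

section
/- For a series system φ(x) = x_1···x_n with independent binary components, if p_i ≤ p_j then the mutual information importances satisfy I(X_i; X) ≥ I(X_j; X), where X = X_1···X_n. -/
/-!
The event `{X = 1}` of a series system lies inside every `{X_k = 1}`, so the joint law of
`(X_k, X)` is determined by `p_k = P(X_k = 1)` and `c = P(X = 1)`, and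
`I(X_k; X) = H(p_k) + H(1 - c) - H(p_k - c)` with `H(x) = -x log₂ x`. As `H` is concave, its
increment `H(p) - H(p - c)` over an interval of fixed length `c` decreases in `p`.
-/

open MeasureTheory ProbabilityTheory

def Coherent {n : ℕ} (φ : (Fin n → Bool) → Bool) : Prop :=
  Monotone φ ∧ ∀ i : Fin n, ∃ x, φ (Function.update x i true) ≠ φ (Function.update x i false)

/-- `-(x * log₂ x)`, with the convention `0 · log 0 = 0`. -/
noncomputable def ent (x : ℝ) : ℝ := -(x * Real.logb 2 x)

/-- Mutual information (base 2) of two binary random variables,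
`I(U;V) = H(U) + H(V) - H(U,V)`. -/
noncomputable def mi {Ω : Type*} [MeasurableSpace Ω] (μ : Measure Ω)
    (U V : Ω → Bool) : ℝ :=
  (∑ a : Bool, ent (μ {ω | U ω = a}).toReal) +
    (∑ b : Bool, ent (μ {ω | V ω = b}).toReal) -
    ∑ a : Bool, ∑ b : Bool, ent (μ {ω | U ω = a ∧ V ω = b}).toReal

/-- `x` and `y - c` are the convex combinations of `x - c` and `y` with weights `(1 - t, t)` and
`(t, 1 - t)`, where `t = c / (y - x + c)`; adding the two concavity inequalities gives the claim. -/
theorem ConcaveOn.map_sub_map_sub_le {𝕜 : Type*} [Field 𝕜] [LinearOrder 𝕜] [IsStrictOrderedRing 𝕜]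
    {s : Set 𝕜} {f : 𝕜 → 𝕜} (hf : ConcaveOn 𝕜 s f) {x y c : 𝕜} (hc : 0 ≤ c)
    (hx : x - c ∈ s) (hy : y ∈ s) (hxy : x ≤ y) :
    f y - f (y - c) ≤ f x - f (x - c) := by
  rcases hc.eq_or_lt with rfl | hc
  · simp
  have hd : 0 < y - x + c := by linarith
  set t := c / (y - x + c)
  have ht0 : 0 ≤ t := by positivity
  have ht1 : 0 ≤ 1 - t := by rw [sub_nonneg, div_le_one hd]; linarith
  have hx_comb : (1 - t) • (x - c) + t • y = x := by
    simp only [smul_eq_mul, t]; field_simp; ring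
  have hyc_comb : t • (x - c) + (1 - t) • y = y - c := by
    simp only [smul_eq_mul, t]; field_simp; ring
  have h₁ := hf.2 hx hy ht1 ht0 (sub_add_cancel 1 t)
  have h₂ := hf.2 hx hy ht0 ht1 (add_sub_cancel t 1)
  rw [hx_comb] at h₁
  rw [hyc_comb] at h₂
  simp only [smul_eq_mul] at h₁ h₂
  linarith

lemma concaveOn_ent : ConcaveOn ℝ (Set.Ici 0) ent := by
  have hent : ent = fun x => (Real.log 2)⁻¹ • Real.negMulLog x := by
    ext x; simp only [ent, Real.logb, Real.negMulLog, smul_eq_mul]; ring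
  rw [hent]
  exact Real.concaveOn_negMulLog.smul (inv_nonneg.2 (Real.log_nonneg one_le_two))

lemma ent_zero : ent 0 = 0 := by simp [ent]

lemma mi_eq_of_subset {Ω : Type*} [MeasurableSpace Ω] (μ : Measure Ω) [IsProbabilityMeasure μ]
    {U V : Ω → Bool} (hU : MeasurableSet {ω | U ω = true}) (hV : MeasurableSet {ω | V ω = true})
    (hVU : {ω | V ω = true} ⊆ {ω | U ω = true}) :
    mi μ U V = ent (μ.real {ω | U ω = true}) + ent (1 - μ.real {ω | V ω = true})
      - ent (μ.real {ω | U ω = true} - μ.real {ω | V ω = true}) := by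
  have hUf : {ω | U ω = false} = {ω | U ω = true}ᶜ := by ext ω; simp
  have hVf : {ω | V ω = false} = {ω | V ω = true}ᶜ := by ext ω; simp
  have hff : {ω | U ω = false ∧ V ω = false} = {ω | U ω = true}ᶜ := by
    ext ω; have h : V ω = true → U ω = true := @hVU ω
    simp only [Set.mem_ofPred_eq, Set.mem_compl_iff]
    revert h; cases U ω <;> cases V ω <;> decide
  have hft : {ω | U ω = false ∧ V ω = true} = ∅ := by
    ext ω; have h : V ω = true → U ω = true := @hVU ω
    simp only [Set.mem_ofPred_eq, Set.mem_empty_iff_false]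
    revert h; cases U ω <;> cases V ω <;> decide
  have htf : {ω | U ω = true ∧ V ω = false} = {ω | U ω = true} \ {ω | V ω = true} := by
    ext ω; simp
  have htt : {ω | U ω = true ∧ V ω = true} = {ω | V ω = true} := by
    ext ω; have h : V ω = true → U ω = true := @hVU ω
    simp only [Set.mem_ofPred_eq]
    revert h; cases U ω <;> cases V ω <;> decide
  simp only [mi, Fintype.sum_bool, ← measureReal_def, hUf, hVf, hff, hft, htf, htt,
    measureReal_compl hU, measureReal_compl hV, measureReal_sdiff hVU hV (measure_ne_top μ _),
    measureReal_empty, probReal_univ, ent_zero]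
  ring

theorem stmt16_general {Ω : Type*} [MeasurableSpace Ω] (μ : Measure Ω) [IsProbabilityMeasure μ]
    {n : ℕ} (X : Fin n → Ω → Bool) (hmeas : ∀ k, Measurable (X k))
    (i j : Fin n) (hij : μ {ω | X i ω = true} ≤ μ {ω | X j ω = true}) :
    mi μ (X j) (fun ω => decide (∀ k, X k ω = true)) ≤
      mi μ (X i) (fun ω => decide (∀ k, X k ω = true)) := by
  have hXk : ∀ k, MeasurableSet {ω | X k ω = true} := fun k =>
    hmeas k (measurableSet_singleton true)
  have hsys : MeasurableSet {ω | decide (∀ k, X k ω = true) = true} := by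
    simpa only [decide_eq_true_eq, Set.ofPred_forall] using MeasurableSet.iInter hXk
  have hsys_sub :
      ∀ k, {ω | decide (∀ k, X k ω = true) = true} ⊆ {ω | X k ω = true} :=
    fun k _ h => of_decide_eq_true h k
  rw [mi_eq_of_subset μ (hXk i) hsys (hsys_sub i),
    mi_eq_of_subset μ (hXk j) hsys (hsys_sub j)]
  have hcp : μ.real {ω | decide (∀ k, X k ω = true) = true} ≤ μ.real {ω | X i ω = true} :=
    measureReal_mono (hsys_sub i)
  have hpq : μ.real {ω | X i ω = true} ≤ μ.real {ω | X j ω = true} :=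
    ENNReal.toReal_mono (measure_ne_top μ _) hij
  have := concaveOn_ent.map_sub_map_sub_le measureReal_nonneg (sub_nonneg.2 hcp)
    (measureReal_nonneg (s := {ω | X j ω = true})) hpq
  linarith

/-- In a series system, less reliable components have larger information importance. -/
theorem stmt16 {Ω : Type*} [MeasurableSpace Ω] (μ : Measure Ω) [IsProbabilityMeasure μ]
    {n : ℕ} (X : Fin n → Ω → Bool) (hmeas : ∀ k, Measurable (X k))
    (hindep : iIndepFun X μ)
    (i j : Fin n) (hij : μ {ω | X i ω = true} ≤ μ {ω | X j ω = true}) :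
    mi μ (X j) (fun ω => decide (∀ k, X k ω = true)) ≤
      mi μ (X i) (fun ω => decide (∀ k, X k ω = true)) :=
  stmt16_general μ X hmeas i j hij
end

section
/- Let T_i and T = τ_φ(T_1,...,T_n) be the lifetime of component i and of a coherent system with independent component lifetimes, with survival function bar F_i(t) = P(T_i > t) for T_i. Then for every fixed t ≥ 0, the function s ↦ Cov(1_{T_i>s}, 1_{T>t}) on [0,∞) attains its maximum at s = t; consequently sup_{s,t≥0} Cov(1_{T_i>s}, 1_{T>t}) = sup_{t≥0} Cov(1_{T_i>t}, 1_{T>t}). -/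
open MeasureTheory ProbabilityTheory

/-- The system lifetime of the coherent structure `φ` with component lifetimes `t`:
the last instant at which the system is still functioning. For coherent `φ` and
nonnegative `t` this equals `max_{path sets P} min_{i ∈ P} t i`. -/
noncomputable def tau {n : ℕ} (φ : (Fin n → Bool) → Bool) (t : Fin n → ℝ) : ℝ :=
  sSup {s : ℝ | φ (fun i => decide (s < t i)) = true}

/-- Survival indicator `1_{s < U}` of a lifetime `U`. -/
noncomputable def ind {Ω : Type*} (U : Ω → ℝ) (s : ℝ) : Ω → ℝ :=
  fun ω => if s < U ω then 1 else 0

/-! Fix `t`. Splitting on component `i` (pivotal decomposition),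
`1_{T > t} = 1_H + 1_{T_i > t} 1_D`, where `H` (the system works at `t` with `i` failed) and
`D` (`i` is critical at `t`) depend only on the other components, hence are independent of
`T_i`. Therefore `Cov(1_{T_i > s}, 1_{T > t}) = P(D) (P(T_i > s, T_i > t) - F̄_i(s) F̄_i(t))`,
and since the events `{T_i > s}`, `{T_i > t}` are nested, the bracket is `F_i(s) F̄_i(t)` or
`F̄_i(s) F_i(t)`, both at most `F_i(t) F̄_i(t)`, its value at `s = t`. The suprema then agree
because every off-diagonal value is dominated by a diagonal one. -/

open Set Filter Topology

section Boolean

variable {ι : Type*} [DecidableEq ι] {φ : (ι → Bool) → Bool}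

theorem Monotone.apply_update_false_le (hφ : Monotone φ) (x : ι → Bool) (i : ι) :
    φ (Function.update x i false) ≤ φ (Function.update x i true) :=
  hφ (Function.update_mono (Bool.false_le true))

theorem Monotone.apply_eq_pivot (hφ : Monotone φ) (x : ι → Bool) (i : ι) :
    φ x = (φ (Function.update x i false) ||
      (x i && (φ (Function.update x i true) && !φ (Function.update x i false)))) := by
  have hle := Bool.le_iff_imp.1 (hφ.apply_update_false_le x i)
  conv_lhs => rw [← Function.update_eq_self i x]
  cases x i <;> cases h0 : φ (Function.update x i false) <;>
    cases h1 : φ (Function.update x i true) <;> simp_all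

end Boolean

theorem eventually_nhdsGT_lt_iff {α : Type*} [TopologicalSpace α] [LinearOrder α]
    [OrderTopology α] (a t : α) : ∀ᶠ s in 𝓝[>] t, (s < a ↔ t < a) := by
  rcases lt_or_ge t a with h | h
  · filter_upwards [Ioo_mem_nhdsGT h] with s hs
    simp [hs.2, h]
  · filter_upwards [self_mem_nhdsWithin] with s (hs : t < s)
    simp [h.trans hs.le, not_lt.2 h]

section Coherent

variable {n : ℕ} {φ : (Fin n → Bool) → Bool}

theorem Coherent.exists_pivotal (hφ : Coherent φ) (i : Fin n) :
    ∃ x, φ (Function.update x i false) = false ∧ φ (Function.update x i true) = true := by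
  obtain ⟨x, hx⟩ := hφ.2 i
  have hle := hφ.1.apply_update_false_le x i
  refine ⟨x, ?_⟩
  revert hx hle
  cases φ (Function.update x i false) <;> cases φ (Function.update x i true) <;> decide

theorem Coherent.apply_false (hφ : Coherent φ) (i : Fin n) : φ (fun _ => false) = false := by
  obtain ⟨x, hx, -⟩ := hφ.exists_pivotal i
  have hle :=
    hφ.1 (show (fun _ => false) ≤ Function.update x i false from fun _ => Bool.false_le _)
  simpa [hx, Bool.le_iff_imp] using hle

theorem Coherent.apply_true (hφ : Coherent φ) (i : Fin n) : φ (fun _ => true) = true := by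
  obtain ⟨x, -, hx⟩ := hφ.exists_pivotal i
  have hle := hφ.1 (show Function.update x i true ≤ fun _ => true from fun _ => Bool.le_true _)
  simpa [hx, Bool.le_iff_imp] using hle

theorem Coherent.lt_tau_iff (hφ : Coherent φ) (i : Fin n) (u : Fin n → ℝ) (t : ℝ) :
    t < tau φ u ↔ φ (fun k => decide (t < u k)) = true := by
  have hanti : Antitone fun s => φ (fun k => decide (s < u k)) := fun s s' hss' =>
    hφ.1 fun k => Bool.le_iff_imp.2 fun h => by simpa using hss'.trans_lt (by simpa using h)
  have hbdd : BddAbove {s : ℝ | φ (fun k => decide (s < u k)) = true} := by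
    obtain ⟨M, hM⟩ := Finite.exists_le u
    refine ⟨M, fun s hs => not_lt.1 fun hMs => ?_⟩
    have : (fun k => decide (s < u k)) = fun _ => false := by
      funext k; simpa using (hM k).trans hMs.le
    simp [this, hφ.apply_false i] at hs
  have hne : {s : ℝ | φ (fun k => decide (s < u k)) = true}.Nonempty := by
    obtain ⟨m, hm⟩ := Finite.exists_ge u
    refine ⟨m - 1, ?_⟩
    have : (fun k => decide (m - 1 < u k)) = fun _ => true := by
      funext k; simpa using (sub_one_lt m).trans_le (hm k)
    simp [this, hφ.apply_true i]
  rw [tau, lt_csSup_iff hbdd hne]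
  constructor
  · rintro ⟨s, hs, hts⟩
    exact Bool.le_iff_imp.1 (hanti hts.le) hs
  · intro ht
    -- the state vector `(s < u k)_k` is constant on a right neighbourhood of `t`
    obtain ⟨s, hs, hts⟩ := ((eventually_all.2 fun k => eventually_nhdsGT_lt_iff (u k) t).and
      self_mem_nhdsWithin).exists
    exact ⟨s, by simpa [hs] using ht, hts⟩

end Coherent

section Covariance

variable {Ω : Type*} {m₁ m₂ mΩ : MeasurableSpace Ω} {μ : Measure Ω}

theorem ProbabilityTheory.Indep.measureReal_inter (hind : Indep m₁ m₂ μ) {A H : Set Ω}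
    (hA : MeasurableSet[m₁] A) (hH : MeasurableSet[m₂] H) :
    μ.real (A ∩ H) = μ.real A * μ.real H := by
  simp only [measureReal_def, (Indep_iff m₁ m₂ μ).1 hind A H hA hH, ENNReal.toReal_mul]

theorem cov_indicator_add_indicator_inter [IsFiniteMeasure μ] (hm₁ : m₁ ≤ mΩ) (hm₂ : m₂ ≤ mΩ)
    (hind : Indep m₁ m₂ μ) {A B H D : Set Ω} (hA : MeasurableSet[m₁] A)
    (hB : MeasurableSet[m₁] B) (hH : MeasurableSet[m₂] H) (hD : MeasurableSet[m₂] D) :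
    cov μ (A.indicator 1) (H.indicator 1 + (B ∩ D).indicator 1) =
      μ.real D * (μ.real (A ∩ B) - μ.real A * μ.real B) := by
  have hint : ∀ {E : Set Ω}, MeasurableSet E → Integrable (E.indicator (1 : Ω → ℝ)) μ :=
    fun hE => (integrable_const 1).indicator hE
  have hAH := (hm₁ _ hA).inter (hm₂ _ hH)
  have hABD := ((hm₁ _ hA).inter (hm₁ _ hB)).inter (hm₂ _ hD)
  have hBD := (hm₁ _ hB).inter (hm₂ _ hD)
  have hprod : A.indicator (1 : Ω → ℝ) * (H.indicator 1 + (B ∩ D).indicator 1) =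
      (A ∩ H).indicator 1 + (A ∩ B ∩ D).indicator 1 := by
    rw [mul_add, ← Set.inter_indicator_one, ← Set.inter_indicator_one, Set.inter_assoc]
  simp only [cov, ← Pi.mul_apply, hprod]
  rw [integral_add' (hint hAH) (hint hABD), integral_add' (hint (hm₂ _ hH)) (hint hBD),
    integral_indicator_one hAH, integral_indicator_one hABD, integral_indicator_one (hm₁ _ hA),
    integral_indicator_one (hm₂ _ hH), integral_indicator_one hBD,
    hind.measureReal_inter hA hH, hind.measureReal_inter (hA.inter hB) hD,
    hind.measureReal_inter hB hD]
  ring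

end Covariance

theorem measureReal_inter_sub_mul_le_of_nested {Ω : Type*} [MeasurableSpace Ω] {μ : Measure Ω}
    [IsProbabilityMeasure μ] {E F : Set Ω} (hEF : E ⊆ F ∨ F ⊆ E) :
    μ.real (E ∩ F) - μ.real E * μ.real F ≤ μ.real F - μ.real F * μ.real F := by
  have hE1 : μ.real E ≤ 1 := measureReal_le_one
  have hF1 : μ.real F ≤ 1 := measureReal_le_one
  have hF0 : 0 ≤ μ.real F := measureReal_nonneg
  rcases hEF with h | h
  · rw [Set.inter_eq_left.2 h]
    nlinarith [measureReal_mono h (μ := μ), measureReal_nonneg (μ := μ) (s := E)]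
  · rw [Set.inter_eq_right.2 h]
    nlinarith [measureReal_mono h (μ := μ)]

theorem ProbabilityTheory.iIndepFun.indep_comap_iSup_compl {Ω ι β : Type*} [MeasurableSpace Ω]
    {μ : Measure Ω} [mβ : MeasurableSpace β] {f : ι → Ω → β} (hf : iIndepFun f μ)
    (hmeas : ∀ j, Measurable (f j)) (i : ι) :
    Indep (mβ.comap (f i)) (⨆ j ∈ ({i}ᶜ : Set ι), mβ.comap (f j)) μ := by
  simpa using indep_iSup_of_disjoint (fun j => (hmeas j).comap_le)
    ((iIndepFun_iff_iIndep _ _ _).1 hf) (disjoint_compl_right (a := ({i} : Set ι)))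

theorem measurable_update_state {Ω : Type*} {mΩ : MeasurableSpace Ω} {n : ℕ}
    {T : Fin n → Ω → ℝ} {i : Fin n} (hT : ∀ k ≠ i, Measurable (T k)) (t : ℝ) (b : Bool) :
    Measurable fun ω => Function.update (fun k => decide (t < T k ω)) i b := by
  refine measurable_pi_lambda _ fun k => ?_
  by_cases hk : k = i
  · subst hk
    simp
  · simp only [Function.update_of_ne hk]
    refine measurable_to_bool ?_
    convert hT k hk (measurableSet_Ioi (a := t)) using 1
    ext
    simp

theorem ind_eq_indicator {Ω : Type*} (U : Ω → ℝ) (s : ℝ) :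
    ind U s = {ω | s < U ω}.indicator 1 := by
  funext ω
  simp [ind, Set.indicator_apply]

theorem cov_ind_tau_eq {Ω : Type*} [MeasurableSpace Ω] {μ : Measure Ω} [IsFiniteMeasure μ]
    {n : ℕ} {T : Fin n → Ω → ℝ} (hmeas : ∀ k, Measurable (T k)) (hindep : iIndepFun T μ)
    {φ : (Fin n → Bool) → Bool} (hφ : Coherent φ) (i : Fin n) (t : ℝ) :
    ∃ K, 0 ≤ K ∧ ∀ s, cov μ (ind (T i) s) (ind (fun ω => tau φ fun k => T k ω) t) =
      K * (μ.real ({ω | s < T i ω} ∩ {ω | t < T i ω}) -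
        μ.real {ω | s < T i ω} * μ.real {ω | t < T i ω}) := by
  set state : Bool → Ω → Fin n → Bool :=
    fun b ω => Function.update (fun k => decide (t < T k ω)) i b
  have hφ_state : ∀ b, Measurable[⨆ j ∈ ({i}ᶜ : Set (Fin n)),
      MeasurableSpace.comap (T j) inferInstance] fun ω => φ (state b ω) :=
    fun b => (measurable_of_countable φ).comp <|
      measurable_update_state (fun k hk => Measurable.of_comap_le
        (le_biSup (fun j => MeasurableSpace.comap (T j) inferInstance) hk)) t b
  set H := {ω | φ (state false ω) = true}
  set D := {ω | φ (state true ω) = true ∧ φ (state false ω) = false}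
  have hA : ∀ s, MeasurableSet[MeasurableSpace.comap (T i) inferInstance] {ω | s < T i ω} :=
    fun s => ⟨Ioi s, measurableSet_Ioi, rfl⟩
  have hsplit : ind (fun ω => tau φ fun k => T k ω) t =
      H.indicator 1 + ({ω | t < T i ω} ∩ D).indicator 1 := by
    have hdisj : Disjoint H ({ω | t < T i ω} ∩ D) :=
      Set.disjoint_left.2 fun ω hH hD => by simp_all [H, D]
    have hunion : {ω | t < tau φ fun k => T k ω} = H ∪ ({ω | t < T i ω} ∩ D) := by
      ext ω
      rw [Set.mem_ofPred_eq, hφ.lt_tau_iff i, hφ.1.apply_eq_pivot _ i]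
      simp [H, D, state]
    rw [ind_eq_indicator, hunion, Set.indicator_union_of_disjoint hdisj]
    rfl
  refine ⟨μ.real D, measureReal_nonneg, fun s => ?_⟩
  rw [hsplit, ind_eq_indicator]
  exact cov_indicator_add_indicator_inter (hmeas i).comap_le
    (iSup₂_le fun j _ => (hmeas j).comap_le) (hindep.indep_comap_iSup_compl hmeas i)
    (hA s) (hA t) (hφ_state false (measurableSet_singleton true))
    ((hφ_state true (measurableSet_singleton true)).inter
      (hφ_state false (measurableSet_singleton false)))

theorem stmt18_general {Ω : Type*} [MeasurableSpace Ω] (μ : Measure Ω) [IsProbabilityMeasure μ]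
    {n : ℕ} (T : Fin n → Ω → ℝ) (hmeas : ∀ i, Measurable (T i))
    (hindep : iIndepFun T μ)
    (φ : (Fin n → Bool) → Bool) (hφ : Coherent φ) (i : Fin n) :
    (∀ t : ℝ, 0 ≤ t → ∀ s : ℝ, 0 ≤ s →
      cov μ (ind (T i) s) (ind (fun ω => tau φ fun k => T k ω) t) ≤
        cov μ (ind (T i) t) (ind (fun ω => tau φ fun k => T k ω) t)) ∧
    sSup {c : ℝ | ∃ s, 0 ≤ s ∧ ∃ t, 0 ≤ t ∧
        c = cov μ (ind (T i) s) (ind (fun ω => tau φ fun k => T k ω) t)} =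
      sSup {c : ℝ | ∃ t, 0 ≤ t ∧
        c = cov μ (ind (T i) t) (ind (fun ω => tau φ fun k => T k ω) t)} := by
  have hdiag : ∀ t : ℝ, 0 ≤ t → ∀ s : ℝ, 0 ≤ s →
      cov μ (ind (T i) s) (ind (fun ω => tau φ fun k => T k ω) t) ≤
        cov μ (ind (T i) t) (ind (fun ω => tau φ fun k => T k ω) t) := by
    intro t _ s _
    obtain ⟨K, hK, hcov⟩ := cov_ind_tau_eq hmeas hindep hφ i t
    rw [hcov, hcov, Set.inter_self]
    refine mul_le_mul_of_nonneg_left (measureReal_inter_sub_mul_le_of_nested ?_) hK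
    exact (le_total t s).imp (fun h _ hω => h.trans_lt hω) (fun h _ hω => h.trans_lt hω)
  refine ⟨hdiag, csSup_eq_csSup_of_forall_exists_le ?_ ?_⟩
  · rintro _ ⟨s, hs, t, ht, rfl⟩
    exact ⟨_, ⟨t, ht, rfl⟩, hdiag t ht s hs⟩
  · rintro _ ⟨t, ht, rfl⟩
    exact ⟨_, ⟨t, ht, t, ht, rfl⟩, le_rfl⟩

/-- For each fixed t ≥ 0, s ↦ Cov(1_{T_i>s}, 1_{T>t}) is maximized at s = t; hence
the double supremum over s,t ≥ 0 equals the supremum over the diagonal. -/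
theorem stmt18 {Ω : Type*} [MeasurableSpace Ω] (μ : Measure Ω) [IsProbabilityMeasure μ]
    {n : ℕ} (T : Fin n → Ω → ℝ) (hmeas : ∀ i, Measurable (T i))
    (hnn : ∀ i ω, 0 ≤ T i ω)
    (hindep : iIndepFun T μ)
    (φ : (Fin n → Bool) → Bool) (hφ : Coherent φ) (i : Fin n) :
    (∀ t : ℝ, 0 ≤ t → ∀ s : ℝ, 0 ≤ s →
      cov μ (ind (T i) s) (ind (fun ω => tau φ fun k => T k ω) t) ≤
        cov μ (ind (T i) t) (ind (fun ω => tau φ fun k => T k ω) t)) ∧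
    sSup {c : ℝ | ∃ s, 0 ≤ s ∧ ∃ t, 0 ≤ t ∧
        c = cov μ (ind (T i) s) (ind (fun ω => tau φ fun k => T k ω) t)} =
      sSup {c : ℝ | ∃ t, 0 ≤ t ∧
        c = cov μ (ind (T i) t) (ind (fun ω => tau φ fun k => T k ω) t)} :=
  stmt18_general μ T hmeas hindep φ hφ i
end
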